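/- For every n ≥ 3, the length of the Ehrenfeucht–Fraïssé game on the cycles C_n and C_{n+1} satisfies log n − 1 < l_EF(C_n, C_{n+1}) < log n + 1. -/

import Mathlib

open SimpleGraph FirstOrder

namespace SymPaper

/-! ### The symmetry breaking-preserving game `Sym(G)`

Two players A and B alternately color previously uncolored edges of `G` (A red, B blue),
A moving first.  A strategy is a function of the opponent-visible history as in the paper:
A's move is a function of B's previous moves, B's move is a function of A's moves so far. -/

variable {V : Type*}

/-- `rounds S1 S2 n` is the list of pairs (A's edge, B's edge) of the first `n` rounds,
when A follows `S1` and B follows `S2`: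
`a i = S1 (b 1, …, b (i-1))` and `b i = S2 (a 1, …, a i)`. -/
def rounds (S1 S2 : List (Sym2 V) → Sym2 V) : ℕ → List (Sym2 V × Sym2 V)
  | 0 => []
  | n + 1 =>
    let prev := rounds S1 S2 n
    let a := S1 (prev.map Prod.snd)
    let b := S2 (prev.map Prod.fst ++ [a])
    prev ++ [(a, b)]

/-- The subgraph (of the ambient vertex set) formed by a list of edges. -/
def graphOf (L : List (Sym2 V)) : SimpleGraph V :=
  SimpleGraph.fromEdgeSet {e | e ∈ L}

/-- The red and the blue subgraphs are isomorphic after round `i`. -/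
def isoAt (S1 S2 : List (Sym2 V) → Sym2 V) (i : ℕ) : Prop :=
  Nonempty (graphOf ((rounds S1 S2 i).map Prod.fst) ≃g graphOf ((rounds S1 S2 i).map Prod.snd))

/-- A strategy for player A: a function mapping every sequence of pairwise distinct
edges to an edge different from them and from all of its own values on prefixes
(required whenever such a fresh edge exists, i.e. `2·i + 1 ≤ |E(G)|`). -/
structure AStrategy (G : SimpleGraph V) where
  move : List (Sym2 V) → Sym2 V
  valid : ∀ L : List (Sym2 V), L.Nodup → (∀ e ∈ L, e ∈ G.edgeSet) →
    2 * L.length + 1 ≤ G.edgeSet.ncard →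
    move L ∈ G.edgeSet ∧ move L ∉ L ∧
      ∀ L' : List (Sym2 V), L' <+: L → L' ≠ L → move L' ≠ move L

/-- A strategy for player B: defined analogously on nonempty sequences. -/
structure BStrategy (G : SimpleGraph V) where
  move : List (Sym2 V) → Sym2 V
  valid : ∀ L : List (Sym2 V), L ≠ [] → L.Nodup → (∀ e ∈ L, e ∈ G.edgeSet) →
    2 * L.length ≤ G.edgeSet.ncard →
    move L ∈ G.edgeSet ∧ move L ∉ L ∧
      ∀ L' : List (Sym2 V), L' ≠ [] → L' <+: L → L' ≠ L → move L' ≠ move L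

/-- `l(S1,S2)`: the maximum `l` (at most the total number `⌊|E(G)|/2⌋` of rounds)
such that the red and blue subgraphs are isomorphic after every round `i ≤ l`. -/
noncomputable def playLength (G : SimpleGraph V) (S1 S2 : List (Sym2 V) → Sym2 V) : ℕ :=
  sSup {l : ℕ | l ≤ G.edgeSet.ncard / 2 ∧ ∀ i ≤ l, isoAt S1 S2 i}

/-- `λ(G) = max_{S2} min_{S1} l(S1,S2)`, the length of the game `Sym(G)`. -/
noncomputable def symLen (G : SimpleGraph V) : ℕ :=
  ⨆ S2 : BStrategy G, ⨅ S1 : AStrategy G, playLength G S1.move S2.move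

/-- `λ̃(G) = min_{S1} max_{S2} l(S1,S2)`. -/
noncomputable def symLenTilde (G : SimpleGraph V) : ℕ :=
  ⨅ S1 : AStrategy G, ⨆ S2 : BStrategy G, playLength G S1.move S2.move

/-! ### The Ehrenfeucht–Fraïssé game `EF(G0,G1)`

Vertex-disjointness is modelled by taking two different vertex types.  In each round the
spoiler (player A) picks a vertex of either graph and the duplicator (player B) answers with
a vertex of the other graph, so each round produces a pair in `V0 × V1`. -/

variable {V0 V1 : Type*}

/-- A duplicator strategy: given the history of pairs and the spoiler's pick
(a vertex of `G0` or of `G1`), produce the pair for this round; the spoiler's pick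
must be the corresponding component of the pair. -/
structure DStrategy (V0 V1 : Type*) where
  resp : List (V0 × V1) → V0 ⊕ V1 → V0 × V1
  resp_left : ∀ L u, (resp L (Sum.inl u)).1 = u
  resp_right : ∀ L w, (resp L (Sum.inr w)).2 = w

/-- The list of pairs of vertices chosen in the first `n` rounds when the duplicator
follows `D` and the spoiler follows `σ`. -/
def efRounds (D : DStrategy V0 V1) (σ : List (V0 × V1) → V0 ⊕ V1) : ℕ → List (V0 × V1)
  | 0 => []
  | n + 1 =>
    let prev := efRounds D σ n
    prev ++ [D.resp prev (σ prev)]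

/-- The chosen pairs form a partial isomorphism between `G0` and `G1`, i.e.
an isomorphism between the subgraphs induced by the chosen vertices. -/
def PartialIso (G0 : SimpleGraph V0) (G1 : SimpleGraph V1) (L : List (V0 × V1)) : Prop :=
  ∀ p ∈ L, ∀ q ∈ L, (p.1 = q.1 ↔ p.2 = q.2) ∧ (G0.Adj p.1 q.1 ↔ G1.Adj p.2 q.2)

/-- The duplicator can survive `k` rounds of `EF(G0,G1)` whatever the spoiler does. -/
def DuplicatorWins (G0 : SimpleGraph V0) (G1 : SimpleGraph V1) (k : ℕ) : Prop :=
  ∃ D : DStrategy V0 V1, ∀ σ : List (V0 × V1) → V0 ⊕ V1, PartialIso G0 G1 (efRounds D σ k)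

/-- `l_EF(G0,G1)`: the maximum number of rounds during which the duplicator, playing
optimally, survives irrespective of the spoiler's strategy (possibly `⊤`). -/
noncomputable def lEF (G0 : SimpleGraph V0) (G1 : SimpleGraph V1) : ℕ∞ :=
  sSup {k : ℕ∞ | ∃ m : ℕ, DuplicatorWins G0 G1 m ∧ k = (m : ℕ∞)}

/-- The canonical embedding of `ℕ∞` into the extended reals. -/
noncomputable def enatToEReal : ℕ∞ → EReal
  | none => ⊤
  | some m => ((m : ℝ) : EReal)

/-! ### Line graphs, paths, cycles -/

/-- The line graph `L(G)`: vertices are the edges of `G`, two of them adjacent iff they are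
distinct and share a vertex of `G`. -/
def lineG (G : SimpleGraph V) : SimpleGraph G.edgeSet where
  Adj e f := e ≠ f ∧ ∃ v : V, v ∈ (e : Sym2 V) ∧ v ∈ (f : Sym2 V)
  symm := by
    constructor
    rintro e f ⟨hne, v, hv, hw⟩
    exact ⟨hne.symm, v, hw, hv⟩
  loopless := by
    constructor
    rintro e ⟨hne, -⟩
    exact hne rfl

/-- `P n`: the path with `n` edges (on `n+1` vertices). -/
abbrev pathG (n : ℕ) : SimpleGraph (Fin (n + 1)) := SimpleGraph.pathGraph (n + 1)

/-- `C n`: the cycle with `n` edges (on `n` vertices); meaningful for `n ≥ 3`. -/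
abbrev cycleG (n : ℕ) : SimpleGraph (Fin n) := SimpleGraph.cycleGraph n

/-! ### Counting quantifiers of first-order formulas -/

/-- The number of quantifier occurrences in a first-order formula. -/
def quantCount {L : Language} {α : Type*} : ∀ {n : ℕ}, L.BoundedFormula α n → ℕ
  | _, .falsum => 0
  | _, .equal _ _ => 0
  | _, .rel _ _ => 0
  | _, .imp f g => quantCount f + quantCount g
  | _, .all f => quantCount f + 1




section Cyc
variable {M : ℕ} [NeZero M]

/-- directed arc length from `a` to `b` on the cycle `Fin M`. -/
def arc (a b : Fin M) : ℕ := (b - a).val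

/-- cyclic distance. -/
def cdist (a b : Fin M) : ℕ := min (arc a b) (arc b a)

lemma arc_lt (a b : Fin M) : arc a b < M := (b - a).isLt

lemma arc_self (a : Fin M) : arc a a = 0 := by
  simp [arc]

lemma arc_eq_zero_iff {a b : Fin M} : arc a b = 0 ↔ a = b := by
  rw [arc]
  rw [show (0:ℕ) = ((0 : Fin M) : ℕ) by simp]
  rw [Fin.val_eq_val, sub_eq_zero]
  exact eq_comm

open Fin.CommRing in
lemma arc_rel (a b c : Fin M) :
    arc a c = arc a b + arc b c ∨ arc a c + M = arc a b + arc b c := by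
  have h : (c - a) = (b - a) + (c - b) := by ring
  have h2 : arc a c = (arc a b + arc b c) % M := by
    rw [arc, h, Fin.add_def]
    rfl
  have h3 := arc_lt a b
  have h4 := arc_lt b c
  have h5 := arc_lt a c
  rcases Nat.lt_or_ge (arc a b + arc b c) M with h6 | h6
  · left; rw [h2, Nat.mod_eq_of_lt h6]
  · right
    have : (arc a b + arc b c) % M = arc a b + arc b c - M := by
      rw [Nat.mod_eq_sub_mod h6, Nat.mod_eq_of_lt (by omega)]
    omega

lemma arc_total (a b : Fin M) : arc a b + arc b a = M ∨ (arc a b = 0 ∧ arc b a = 0) := by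
  rcases arc_rel a b a with h | h
  · right
    rw [arc_self] at h
    omega
  · left
    rw [arc_self] at h
    omega

lemma arc_add (a c : Fin M) : arc a (a + c) = c.val := by
  rw [arc, add_sub_cancel_left]

lemma arc_sub (a c : Fin M) : arc (a - c) a = c.val := by
  rw [arc, sub_sub_cancel]

lemma cdist_comm (a b : Fin M) : cdist a b = cdist b a := by
  rw [cdist, cdist, Nat.min_comm]

lemma cdist_self (a : Fin M) : cdist a a = 0 := by
  simp [cdist, arc_self]

lemma cdist_eq_zero_iff {a b : Fin M} : cdist a b = 0 ↔ a = b := by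
  constructor
  · intro h
    rcases Nat.min_eq_zero_iff.mp h with h | h
    · exact arc_eq_zero_iff.mp h
    · exact (arc_eq_zero_iff.mp h).symm
  · rintro rfl; exact cdist_self a

lemma two_cdist_le (a b : Fin M) : 2 * cdist a b ≤ M := by
  rcases arc_total a b with h | h <;> rw [cdist] <;> omega

lemma cdist_arc (a b : Fin M) : arc a b = cdist a b ∨ arc b a = cdist a b := by
  rw [cdist]; omega

lemma tri (a b c : Fin M) :
    cdist a b + cdist b c = cdist a c ∨ cdist a b = cdist b c + cdist a c ∨
      cdist b c = cdist a b + cdist a c ∨ cdist a b + cdist b c + cdist a c = M := by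
  have h1 := arc_rel a b c
  have t1 := arc_total a b
  have t2 := arc_total b c
  have t3 := arc_total a c
  have l1 := arc_lt a b
  have l2 := arc_lt b c
  have l3 := arc_lt a c
  rw [cdist, cdist, cdist]
  omega

lemma tri_le (a b c : Fin M) : cdist a c ≤ cdist a b + cdist b c := by
  have h := tri a b c
  have h1 := two_cdist_le a b
  have h2 := two_cdist_le b c
  have h3 := two_cdist_le a c
  omega

lemma cdist_of_arc {a v : Fin M} {c : ℕ} (h1 : arc a v = c) (hc : 2 * c ≤ M) :
    cdist a v = c := by
  have hM : (0:ℕ) < M := Nat.pos_of_ne_zero (NeZero.ne M)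
  rcases arc_total a v with h | h <;> rw [cdist] <;> omega

lemma cdist_add_right (a : Fin M) {c : ℕ} (hcM : c < M) (hc : 2 * c ≤ M) :
    cdist a (a + (⟨c, hcM⟩ : Fin M)) = c := by
  have h1 : arc a (a + (⟨c, hcM⟩ : Fin M)) = c := by rw [arc_add]
  exact cdist_of_arc h1 hc

/-- midpoint-type realization: split a pair at distance `s+t` into exact distances `s`, `t`. -/
lemma exists_split (p p' : Fin M) {s t : ℕ} (h : cdist p p' = s + t) :
    ∃ v : Fin M, cdist p v = s ∧ cdist v p' = t := by
  have hhalf := two_cdist_le p p'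
  have hM : (0:ℕ) < M := Nat.pos_of_ne_zero (NeZero.ne M)
  have hsM : s < M := by omega
  rcases cdist_arc p p' with hd | hd
  · refine ⟨p + (⟨s, hsM⟩ : Fin M), ?_, ?_⟩
    · exact cdist_add_right p hsM (by omega)
    · set v := p + (⟨s, hsM⟩ : Fin M) with hv
      have h1 : arc p v = s := by rw [hv, arc_add]
      have h2 := arc_rel p v p'
      have h3 : arc v p' = t := by
        have := arc_lt v p'
        omega
      rcases arc_total v p' with h4 | h4
      · rw [cdist, h3]; omega
      · rw [cdist, h3]; omega
  · -- arc p' p = s + t ; go backwards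
    refine ⟨p - (⟨s, hsM⟩ : Fin M), ?_, ?_⟩
    · set v := p - (⟨s, hsM⟩ : Fin M) with hv
      have h1 : arc v p = s := by rw [hv, arc_sub]
      rcases arc_total v p with h4 | h4
      · rw [cdist, h1]; omega
      · rw [cdist, h1]; omega
    · set v := p - (⟨s, hsM⟩ : Fin M) with hv
      have h1 : arc v p = s := by rw [hv, arc_sub]
      have h2 := arc_rel p' v p
      have h3 : arc p' v = t := by
        have := arc_lt p' v
        omega
      rcases arc_total p' v with h4 | h4
      · rw [cdist, h3]; omega
      · rw [cdist, h3]; omega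

lemma adj_iff_cdist (h3 : 3 ≤ M) (a b : Fin M) :
    (SimpleGraph.cycleGraph M).Adj a b ↔ cdist a b = 1 := by
  rw [SimpleGraph.cycleGraph_adj']
  have h1 := arc_total a b
  have h2 := arc_lt a b
  have h4 := arc_lt b a
  show (a - b).val = 1 ∨ (b - a).val = 1 ↔ _
  rw [show ((a - b).val = arc b a) from rfl, show ((b - a).val = arc a b) from rfl, cdist]
  omega

end Cyc

set_option maxHeartbeats 4000000 in
/-- the pure arithmetic heart of the duplicator's one-step matching. -/
lemma match_step {M N θ θ' d0 A A' B B' X X' Y Y' : ℕ}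
    (hθ : θ = 2 * θ' - 1) (hθ' : 2 ≤ θ') (hd0 : d0 < θ')
    (hA : A + A' = M ∨ (A = 0 ∧ A' = 0)) (hB : B + B' = N ∨ (B = 0 ∧ B' = 0))
    (hX : X + X' = M ∨ (X = 0 ∧ X' = 0)) (hY : Y + Y' = N ∨ (Y = 0 ∧ Y' = 0))
    (hXM : X < M) (hYN : Y < N) (hAM : A < M) (hBN : B < N)
    (hd0M : 2 * d0 ≤ M) (hd0N : 2 * d0 ≤ N)
    (hmodX : d0 + X = A ∨ d0 + X = A + M) (hmodY : d0 + Y = B ∨ d0 + Y = B + N)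
    (hsize : (θ + 2 * θ' ≤ M + 2 ∧ θ + 2 * θ' ≤ N + 2) ∨ (A = 0 ∧ B = 0 ∧ A' = 0 ∧ B' = 0))
    (hinv : (A = B ∧ A < θ) ∨ (A' = B' ∧ A' < θ) ∨ (θ ≤ min A A' ∧ θ ≤ min B B')) :
    (X = Y ∧ X < θ') ∨ (X' = Y' ∧ X' < θ') ∨ (θ' ≤ min X X' ∧ θ' ≤ min Y Y') := by
  rcases hinv with ⟨h1, h2⟩ | ⟨h1, h2⟩ | ⟨h1, h2⟩ <;>
    rcases hmodX with h3 | h3 <;> rcases hmodY with h4 | h4 <;>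
    rcases hX with h5 | ⟨h5, h6⟩ <;> rcases hY with h7 | ⟨h7, h8⟩ <;>
    rcases hsize with ⟨h9, h10⟩ | ⟨h9, h10, h11, h12⟩ <;>
    omega

/-- monotonicity of matching in the threshold, arithmetic form. -/
lemma match_mono_arith {M N θ θ' A A' B B' : ℕ}
    (hθ' : 1 ≤ θ') (hθθ' : θ' ≤ θ)
    (hA : A + A' = M ∨ (A = 0 ∧ A' = 0)) (hB : B + B' = N ∨ (B = 0 ∧ B' = 0))
    (hAM : A < M) (hBN : B < N)
    (hsM : θ + θ' ≤ M + 1) (hsN : θ + θ' ≤ N + 1)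
    (hinv : (A = B ∧ A < θ) ∨ (A' = B' ∧ A' < θ) ∨ (θ ≤ min A A' ∧ θ ≤ min B B')) :
    (A = B ∧ A < θ') ∨ (A' = B' ∧ A' < θ') ∨ (θ' ≤ min A A' ∧ θ' ≤ min B B') := by
  omega



section MatchSec
variable {M N : ℕ} [NeZero M] [NeZero N]

/-- the duplicator's matching condition on a pair of pairs. -/
def Mtch (θ : ℕ) (x : Fin M) (y : Fin N) (x' : Fin M) (y' : Fin N) : Prop :=
  (arc x x' = arc y y' ∧ arc x x' < θ) ∨ (arc x' x = arc y' y ∧ arc x' x < θ) ∨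
    (θ ≤ cdist x x' ∧ θ ≤ cdist y y')

lemma Mtch_symm_pairs {θ : ℕ} {x x' : Fin M} {y y' : Fin N} :
    Mtch θ x y x' y' → Mtch θ x' y' x y := by
  rintro (h | h | h)
  · exact Or.inr (Or.inl h)
  · exact Or.inl h
  · rw [Mtch, cdist_comm x' x, cdist_comm y' y]
    exact Or.inr (Or.inr h)

lemma Mtch_symm_sides {θ : ℕ} {x x' : Fin M} {y y' : Fin N} :
    Mtch θ x y x' y' → Mtch θ y x y' x' := by
  rintro (⟨h1, h2⟩ | ⟨h1, h2⟩ | h) <;>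
    [exact Or.inl ⟨h1.symm, h1 ▸ h2⟩; exact Or.inr (Or.inl ⟨h1.symm, h1 ▸ h2⟩);
      exact Or.inr (Or.inr ⟨h.2, h.1⟩)]

lemma Mtch_self (θ : ℕ) (hθ : 1 ≤ θ) (x : Fin M) (y : Fin N) : Mtch θ x y x y := by
  left
  rw [arc_self, arc_self]
  omega

lemma Mtch_mono {θ θ' : ℕ} {x x' : Fin M} {y y' : Fin N}
    (hθ' : 1 ≤ θ') (hle : θ' ≤ θ) (hsM : θ + θ' ≤ M + 1) (hsN : θ + θ' ≤ N + 1)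
    (h : Mtch θ x y x' y') : Mtch θ' x y x' y' := by
  have h1 := arc_total x x'
  have h2 := arc_total y y'
  have h3 := arc_lt x x'
  have h4 := arc_lt y y'
  have e1 : cdist x x' = min (arc x x') (arc x' x) := rfl
  have e2 : cdist y y' = min (arc y y') (arc y' y) := rfl
  rcases h with ⟨ha, hb⟩ | ⟨ha, hb⟩ | ⟨ha, hb⟩ <;> rw [Mtch] <;> omega

open Fin.NatCast in
lemma cast_arc (a b : Fin M) : ((arc a b : ℕ) : Fin M) = b - a := by
  rw [arc, Fin.cast_val_eq_self]

open Fin.NatCast in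
/-- there is a vertex at distance `≥ c` from every entry of `Q`. -/
lemma far_exists (c : ℕ) (hc : 1 ≤ c) (hc2 : c ≤ N) (Q : List (Fin N))
    (hN : Q.length * (2 * c - 1) + 1 ≤ N) :
    ∃ v : Fin N, ∀ q ∈ Q, c ≤ cdist v q := by
  classical
  have hcN : c - 1 < N := by omega
  set ball : Fin N → Finset (Fin N) := fun q =>
    (Finset.range (2 * c - 1)).image
      (fun (i : ℕ) => q + ((i : ℕ) : Fin N) - (((c - 1 : ℕ) : ℕ) : Fin N)) with hball
  have hcard : ∀ q, (ball q).card ≤ 2 * c - 1 := fun q =>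
    le_trans Finset.card_image_le (by simp)
  set bad : Finset (Fin N) := Q.toFinset.biUnion ball with hbad
  have hbadcard : bad.card < N := by
    calc bad.card ≤ Q.toFinset.card * (2 * c - 1) := by
          refine le_trans (Finset.card_biUnion_le) ?_
          refine le_trans (Finset.sum_le_card_nsmul _ _ (2 * c - 1) (fun q _ => hcard q)) ?_
          simp [mul_comm]
      _ ≤ Q.length * (2 * c - 1) := Nat.mul_le_mul_right _ Q.toFinset_card_le
      _ < N := by omega
  have hne : (badᶜ : Finset (Fin N)).Nonempty := by
    rw [← Finset.card_pos, Finset.card_compl, Fintype.card_fin]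
    omega
  obtain ⟨v, hv⟩ := hne
  rw [Finset.mem_compl] at hv
  refine ⟨v, fun q hq => ?_⟩
  by_contra hlt
  push_neg at hlt
  apply hv
  rw [hbad, Finset.mem_biUnion]
  refine ⟨q, List.mem_toFinset.mpr hq, ?_⟩
  rw [hball]
  simp only [Finset.mem_image, Finset.mem_range]
  have hmin : cdist v q = min (arc v q) (arc q v) := rfl
  rcases Nat.lt_or_ge (arc q v) c with h | h
  · refine ⟨arc q v + (c - 1), by omega, ?_⟩
    rw [Nat.cast_add, cast_arc]
    abel_nf
  · have h2 : arc v q < c := by omega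
    refine ⟨(c - 1) - arc v q, by omega, ?_⟩
    have hc1 : (((c - 1 : ℕ) : ℕ) : Fin N) = ((((c-1) - arc v q : ℕ)) : Fin N) + ((arc v q : ℕ) : Fin N) := by
      rw [← Nat.cast_add]
      congr 1
      omega
    rw [hc1, cast_arc]
    abel

/-- key extension lemma: the duplicator can answer `u` with some `v`. -/
lemma extend {θ' : ℕ} (hθ' : 2 ≤ θ') (L : List (Fin M × Fin N))
    (hInv : ∀ P ∈ L, ∀ P' ∈ L, Mtch (2 * θ' - 1) P.1 P.2 P'.1 P'.2)
    (hsize2 : 2 ≤ L.length → 4 * θ' ≤ M + 3 ∧ 4 * θ' ≤ N + 3)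
    (hcount : L.length * (2 * θ' - 1) + 1 ≤ N)
    (hthN : θ' ≤ N)
    (hth2 : L ≠ [] → 2 * θ' - 2 ≤ M ∧ 2 * θ' - 2 ≤ N)
    (u : Fin M) : ∃ v : Fin N, ∀ P ∈ L, Mtch θ' u v P.1 P.2 := by
  classical
  by_cases hfar : ∀ P ∈ L, θ' ≤ cdist u P.1
  · -- far case
    obtain ⟨v, hv⟩ := far_exists θ' (by omega) hthN (L.map Prod.snd)
      (by rwa [List.length_map])
    exact ⟨v, fun P hP => Or.inr (Or.inr ⟨hfar P hP,
      hv P.2 (List.mem_map_of_mem (f := Prod.snd) hP)⟩)⟩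
  · -- close case
    push_neg at hfar
    obtain ⟨P0, hP0, hclose⟩ := hfar
    set d0 := cdist u P0.1 with hd0
    have hLne : L ≠ [] := fun h => by simp [h] at hP0
    obtain ⟨hM2, hN2⟩ := hth2 hLne
    have hd0M : 2 * d0 ≤ M := two_cdist_le u P0.1
    have hd0N : 2 * d0 ≤ N := by omega
    have hd0N' : d0 < N := by omega
    have hsize : ∀ P ∈ L, ((2*θ'-1) + 2 * θ' ≤ M + 2 ∧ (2*θ'-1) + 2 * θ' ≤ N + 2) ∨ P = P0 := by
      intro P hP
      rcases Nat.lt_or_ge L.length 2 with hl | hl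
      · right
        match L, hP0, hP, hl with
        | [a], h1, h2, _ => simp_all
      · left
        have := hsize2 hl
        omega
    rcases cdist_arc u P0.1 with harc | harc
    · -- arc u P0.1 = d0 : u is "before" P0.1 ; answer v := P0.2 - d0
      refine ⟨P0.2 - (⟨d0, hd0N'⟩ : Fin N), fun P hP => ?_⟩
      set v := P0.2 - (⟨d0, hd0N'⟩ : Fin N) with hv
      have harcv : arc v P0.2 = d0 := by rw [hv, arc_sub]
      have hmodX : d0 + arc P.1 u = arc P.1 P0.1 ∨
          d0 + arc P.1 u = arc P.1 P0.1 + M := by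
        rcases arc_rel P.1 u P0.1 with h | h <;> rw [harc] at h <;> omega
      have hmodY : d0 + arc P.2 v = arc P.2 P0.2 ∨
          d0 + arc P.2 v = arc P.2 P0.2 + N := by
        rcases arc_rel P.2 v P0.2 with h | h <;> rw [harcv] at h <;> omega
      have hinv := hInv P hP P0 hP0
      have hsz := hsize P hP
      have hms := match_step (M := M) (N := N) (θ := 2*θ'-1) (θ' := θ') (d0 := d0)
        (A := arc P.1 P0.1) (A' := arc P0.1 P.1) (B := arc P.2 P0.2) (B' := arc P0.2 P.2)
        (X := arc P.1 u) (X' := arc u P.1) (Y := arc P.2 v) (Y' := arc v P.2)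
        rfl hθ' hclose (arc_total P.1 P0.1) (arc_total P.2 P0.2)
        (arc_total P.1 u) (arc_total P.2 v)
        (arc_lt P.1 u) (arc_lt P.2 v) (arc_lt P.1 P0.1) (arc_lt P.2 P0.2)
        hd0M hd0N hmodX hmodY
        (by
          rcases hsz with h | rfl
          · exact Or.inl h
          · right
            simp [arc_self])
        (by
          rcases hinv with ⟨h1, h2⟩ | ⟨h1, h2⟩ | ⟨h1, h2⟩
          · exact Or.inl ⟨h1, h2⟩
          · exact Or.inr (Or.inl ⟨h1, h2⟩)
          · exact Or.inr (Or.inr ⟨h1, h2⟩))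
      rcases hms with ⟨h1, h2⟩ | ⟨h1, h2⟩ | ⟨h1, h2⟩
      · exact Or.inr (Or.inl ⟨h1, h2⟩)
      · exact Or.inl ⟨h1, h2⟩
      · refine Or.inr (Or.inr ⟨?_, ?_⟩)
        · show θ' ≤ min (arc u P.1) (arc P.1 u)
          omega
        · show θ' ≤ min (arc v P.2) (arc P.2 v)
          omega
    · -- arc P0.1 u = d0 : u is "after" P0.1 ; answer v := P0.2 + d0
      refine ⟨P0.2 + (⟨d0, hd0N'⟩ : Fin N), fun P hP => ?_⟩
      set v := P0.2 + (⟨d0, hd0N'⟩ : Fin N) with hv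
      have harcv : arc P0.2 v = d0 := by rw [hv, arc_add]
      have hmodX : d0 + arc u P.1 = arc P0.1 P.1 ∨
          d0 + arc u P.1 = arc P0.1 P.1 + M := by
        rcases arc_rel P0.1 u P.1 with h | h <;> rw [harc] at h <;> omega
      have hmodY : d0 + arc v P.2 = arc P0.2 P.2 ∨
          d0 + arc v P.2 = arc P0.2 P.2 + N := by
        rcases arc_rel P0.2 v P.2 with h | h <;> rw [harcv] at h <;> omega
      have hinv := hInv P0 hP0 P hP
      have hsz := hsize P hP
      have hms := match_step (M := M) (N := N) (θ := 2*θ'-1) (θ' := θ') (d0 := d0)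
        (A := arc P0.1 P.1) (A' := arc P.1 P0.1) (B := arc P0.2 P.2) (B' := arc P.2 P0.2)
        (X := arc u P.1) (X' := arc P.1 u) (Y := arc v P.2) (Y' := arc P.2 v)
        rfl hθ' hclose (arc_total P0.1 P.1) (arc_total P0.2 P.2)
        (arc_total u P.1) (arc_total v P.2)
        (arc_lt u P.1) (arc_lt v P.2) (arc_lt P0.1 P.1) (arc_lt P0.2 P.2)
        hd0M hd0N hmodX hmodY
        (by
          rcases hsz with h | rfl
          · exact Or.inl h
          · right
            simp [arc_self])
        (by
          rcases hinv with ⟨h1, h2⟩ | ⟨h1, h2⟩ | ⟨h1, h2⟩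
          · exact Or.inl ⟨h1, h2⟩
          · exact Or.inr (Or.inl ⟨h1, h2⟩)
          · exact Or.inr (Or.inr ⟨h1, h2⟩))
      rcases hms with ⟨h1, h2⟩ | ⟨h1, h2⟩ | ⟨h1, h2⟩
      · exact Or.inl ⟨h1, h2⟩
      · exact Or.inr (Or.inl ⟨h1, h2⟩)
      · exact Or.inr (Or.inr ⟨h1, h2⟩)

end MatchSec

lemma efRounds_zero (D : DStrategy V0 V1) (σ) : efRounds D σ 0 = [] := rfl

lemma efRounds_succ (D : DStrategy V0 V1) (σ) (i : ℕ) :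
    efRounds D σ (i+1) = efRounds D σ i ++ [D.resp (efRounds D σ i) (σ (efRounds D σ i))] := rfl



-- === generic efRounds lemmas ===
lemma efRounds_length (D : DStrategy V0 V1) (σ) (i : ℕ) : (efRounds D σ i).length = i := by
  induction i with
  | zero => rfl
  | succ n ih => simp [efRounds, ih]

lemma efRounds_prefix (D : DStrategy V0 V1) (σ) {i j : ℕ} (h : i ≤ j) :
    ∀ P ∈ efRounds D σ i, P ∈ efRounds D σ j := by
  induction j with
  | zero =>
    intro P hP
    have : i = 0 := by omega
    subst this
    exact hP
  | succ m ih =>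
    intro P hP
    rcases Nat.lt_or_ge i (m+1) with h2 | h2
    · have := ih (by omega) P hP
      simp [efRounds]
      exact Or.inl this
    · have : i = m + 1 := by omega
      subst this
      exact hP

-- === the crucial arithmetic budget ===
lemma budget (i j : ℕ) (hi : 1 ≤ i) (hj : 1 ≤ j) : i * (2^j + 1) + 1 ≤ 2^(i+j) := by
  induction i with
  | zero => omega
  | succ m ih =>
    rcases Nat.eq_or_lt_of_le hi with h | h
    · -- m = 0
      have : m = 0 := by omega
      subst this
      have h1 : (2:ℕ)^j ≥ 2 := by
        calc (2:ℕ)^j ≥ 2^1 := Nat.pow_le_pow_right (by norm_num) hj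
        _ = 2 := by norm_num
      have h2 : (2:ℕ)^(0+1+j) = 2 * 2^j := by
        rw [show 0+1+j = j+1 by omega, pow_succ, mul_comm]
      omega
    · have hm : 1 ≤ m := by omega
      have := ih hm
      have h2 : (2:ℕ)^(m+1+j) = 2 * 2^(m+j) := by
        rw [show m+1+j = (m+j)+1 by omega, pow_succ, mul_comm]
      have h3 : (2:ℕ)^j + 1 ≤ 2^(m+j) := by
        have : (2:ℕ)^j < 2^(m+j) := Nat.pow_lt_pow_right (by norm_num) (by omega)
        omega
      have h4 : (m+1) * (2^j+1) = m * (2^j+1) + (2^j+1) := by ring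
      omega

lemma mtch_two_partial {M N : ℕ} [NeZero M] [NeZero N] (hM : 3 ≤ M) (hN : 3 ≤ N)
    {x x' : Fin M} {y y' : Fin N} (h : Mtch 2 x y x' y') :
    (x = x' ↔ y = y') ∧ ((SimpleGraph.cycleGraph M).Adj x x' ↔ (SimpleGraph.cycleGraph N).Adj y y') := by
  rw [adj_iff_cdist hM, adj_iff_cdist hN, ← arc_eq_zero_iff (a := x) (b := x'),
    ← arc_eq_zero_iff (a := y) (b := y')]
  have e1 : cdist x x' = min (arc x x') (arc x' x) := rfl
  have e2 : cdist y y' = min (arc y y') (arc y' y) := rfl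
  have t1 := arc_total x x'
  have t2 := arc_total y y'
  have l1 := arc_lt x x'
  have l2 := arc_lt y y'
  rcases h with ⟨h1, h2⟩ | ⟨h1, h2⟩ | ⟨h1, h2⟩ <;> constructor <;> omega

-- === the duplicator's strategy ===
open Classical in
noncomputable def dupResp (n k : ℕ) [NeZero n] :
    List (Fin n × Fin (n+1)) → (Fin n ⊕ Fin (n+1)) → (Fin n × Fin (n+1)) := fun L s =>
  match s with
  | .inl u => (u, if h : ∃ v : Fin (n+1), ∀ P ∈ L,
      Mtch (2^(k - (L.length+1)) + 1) u v P.1 P.2 then h.choose else 0)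
  | .inr w => (if h : ∃ v : Fin n, ∀ P ∈ L,
      Mtch (2^(k - (L.length+1)) + 1) w v P.2 P.1 then h.choose else 0, w)

theorem dup_wins {n k : ℕ} (h3 : 3 ≤ n) (hk1 : 1 ≤ k) (hkn : 2^k ≤ n) :
    DuplicatorWins (cycleG n) (cycleG (n+1)) k := by
  haveI : NeZero n := ⟨by omega⟩
  classical
  refine ⟨⟨dupResp n k, fun L u => rfl, fun L w => rfl⟩, fun σ => ?_⟩
  set D : DStrategy (Fin n) (Fin (n+1)) := ⟨dupResp n k, fun L u => rfl, fun L w => rfl⟩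
    with hD
  -- main invariant
  have key : ∀ i, i ≤ k → ∀ P ∈ efRounds D σ i, ∀ P' ∈ efRounds D σ i,
      Mtch (2^(k-i) + 1) P.1 P.2 P'.1 P'.2 := by
    intro i
    induction i with
    | zero => intro _ P hP; simp [efRounds] at hP
    | succ m ih =>
      intro hmk P hP P' hP'
      have hm : m ≤ k := by omega
      have hIH := ih hm
      set L := efRounds D σ m with hL
      have hlen : L.length = m := efRounds_length D σ m
      -- threshold facts
      set θ' : ℕ := 2^(k-(m+1)) + 1 with hθ'
      have hθ'2 : 2 ≤ θ' := by
        have : 1 ≤ (2:ℕ)^(k-(m+1)) := Nat.one_le_two_pow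
        omega
      have hpow : 2^(k-m) = 2 * 2^(k-(m+1)) := by
        rw [show k - m = (k - (m+1)) + 1 by omega, pow_succ, mul_comm]
      have hθeq : 2 * θ' - 1 = 2^(k-m) + 1 := by omega
      have hInvL : ∀ P ∈ L, ∀ P' ∈ L, Mtch (2 * θ' - 1) P.1 P.2 P'.1 P'.2 := by
        rw [hθeq]; exact hIH
      -- size facts
      have hle1 : (2:ℕ)^(k-(m+1)) ≤ 2^(k-1) := Nat.pow_le_pow_right (by norm_num) (by omega)
      have hle0 : (2:ℕ)^(k-m) ≤ 2^k := Nat.pow_le_pow_right (by norm_num) (by omega)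
      have hk2 : (2:ℕ)^(k-1) * 2 = 2^k := by
        rw [← pow_succ]
        congr 1
        omega
      have h1le : 1 ≤ (2:ℕ)^(k-1) := Nat.one_le_two_pow
      have hd1 : 1 ≤ (2:ℕ)^(k-(m+1)) := Nat.one_le_two_pow
      have hsize2 : 2 ≤ L.length → (4 * θ' ≤ n + 3 ∧ 4 * θ' ≤ (n+1) + 3) := by
        intro h2m
        have hm2 : 2 ≤ m := by omega
        have h8 : (2:ℕ)^(k-(m+1)) * 8 ≤ 2^k := by
          calc (2:ℕ)^(k-(m+1)) * 8 = 2^((k-(m+1))+3) := by rw [pow_add]; norm_num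
          _ ≤ 2^k := Nat.pow_le_pow_right (by norm_num) (by omega)
        omega
      have hcount : ∀ {W : ℕ}, n ≤ W → L.length * (2 * θ' - 1) + 1 ≤ W := by
        intro W hW
        rcases Nat.eq_zero_or_pos m with rfl | hm1
        · simp [hlen]; omega
        · have := budget m (k-m) hm1 (by omega)
          rw [show m + (k-m) = k by omega] at this
          have : m * (2^(k-m)+1) + 1 ≤ n := le_trans this hkn
          rw [hlen, hθeq]
          omega
      have hthN : ∀ {W : ℕ}, n ≤ W → θ' ≤ W := by
        intro W hW
        have : (2:ℕ)^(k-1) + 1 ≤ 2^k := by omega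
        omega
      have hth2 : ∀ {W : ℕ}, n ≤ W → 2 * θ' - 2 ≤ W := by
        intro W hW
        have : (2:ℕ)^(k-(m+1)) * 2 ≤ 2^k := by
          calc (2:ℕ)^(k-(m+1)) * 2 ≤ 2^(k-1) * 2 := by omega
          _ = 2^k := hk2
        omega
      -- the new pair satisfies Mtch θ' against everything in L
      have hnew : ∀ Q ∈ L, Mtch θ' (D.resp L (σ L)).1 (D.resp L (σ L)).2 Q.1 Q.2 := by
        rcases hσ : σ L with u | w
        · -- spoiler picks in Fin n
          have hex : ∃ v : Fin (n+1), ∀ P ∈ L, Mtch (2^(k - (L.length+1)) + 1) u v P.1 P.2 := by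
            rw [hlen]
            exact extend hθ'2 L hInvL hsize2 (hcount (by omega)) (hthN (by omega))
              (fun _ => ⟨hth2 (le_refl n), hth2 (by omega)⟩) u
          intro Q hQ
          show Mtch θ' (dupResp n k L (Sum.inl u)).1 (dupResp n k L (Sum.inl u)).2 Q.1 Q.2
          rw [dupResp]
          simp only [dif_pos hex]
          have hθL : (2^(k - (L.length+1)) + 1) = θ' := by rw [hlen]
          exact hθL ▸ (hex.choose_spec Q hQ)
        · -- spoiler picks in Fin (n+1)
          have hex : ∃ v : Fin n, ∀ P ∈ L, Mtch (2^(k - (L.length+1)) + 1) w v P.2 P.1 := by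
          -- apply extend on the swapped list
            rw [hlen]
            have hInvSw : ∀ P ∈ L.map Prod.swap, ∀ P' ∈ L.map Prod.swap,
                Mtch (2 * θ' - 1) P.1 P.2 P'.1 P'.2 := by
              intro P hP P' hP'
              rw [List.mem_map] at hP hP'
              obtain ⟨a, ha, rfl⟩ := hP
              obtain ⟨b, hb, rfl⟩ := hP'
              exact Mtch_symm_sides (hInvL a ha b hb)
            have := extend (M := n+1) (N := n) hθ'2 (L.map Prod.swap) hInvSw
              (by rw [List.length_map]; intro h; have := hsize2 h; omega)
              (by rw [List.length_map]; exact hcount (le_refl n))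
              (hthN (le_refl n))
              (fun _ => ⟨hth2 (by omega), hth2 (le_refl n)⟩) w
            obtain ⟨v, hv⟩ := this
            refine ⟨v, fun P hP => ?_⟩
            have := hv P.swap (List.mem_map_of_mem (f := Prod.swap) hP)
            exact this
          intro Q hQ
          show Mtch θ' (dupResp n k L (Sum.inr w)).1 (dupResp n k L (Sum.inr w)).2 Q.1 Q.2
          rw [dupResp]
          simp only [dif_pos hex]
          have hθL : (2^(k - (L.length+1)) + 1) = θ' := by rw [hlen]
          exact Mtch_symm_sides (hθL ▸ (hex.choose_spec Q hQ))
      -- now put the invariant together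
      have hsplit : efRounds D σ (m+1) = L ++ [D.resp L (σ L)] := rfl
      replace hP : P ∈ L ∨ P = D.resp L (σ L) := by
        have h0 : P ∈ L ++ [D.resp L (σ L)] := hsplit ▸ hP
        rw [List.mem_append, List.mem_singleton] at h0
        exact h0
      replace hP' : P' ∈ L ∨ P' = D.resp L (σ L) := by
        have h0 : P' ∈ L ++ [D.resp L (σ L)] := hsplit ▸ hP'
        rw [List.mem_append, List.mem_singleton] at h0
        exact h0
      have hmono : ∀ Q ∈ L, ∀ Q' ∈ L, Mtch θ' Q.1 Q.2 Q'.1 Q'.2 := by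
        intro Q hQ Q' hQ'
        have hne : L ≠ [] := by
          intro h
          rw [h] at hQ
          simp at hQ
        have hm1 : 1 ≤ m := by
          by_contra hc
          have hm0 : m = 0 := by omega
          rw [hL, hm0] at hQ
          simp [efRounds] at hQ
        have h4 : (2:ℕ)^(k-(m+1)) * 4 ≤ 2^k := by
          calc (2:ℕ)^(k-(m+1)) * 4 = 2^((k-(m+1))+2) := by rw [pow_add]; norm_num
          _ ≤ 2^k := Nat.pow_le_pow_right (by norm_num) (by omega)
        refine Mtch_mono (by omega) (by rw [hθeq]; omega) ?_ ?_ (hInvL Q hQ Q' hQ')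
        · omega
        · omega
      rcases hP with hP | rfl <;> rcases hP' with hP' | rfl
      · exact hmono P hP P' hP'
      · exact Mtch_symm_pairs (hnew P hP)
      · exact hnew P' hP'
      · exact Mtch_self θ' (by omega) _ _
  -- conclude partial isomorphism
  intro p hp q hq
  have h := key k (le_refl k) p hp q hq
  rw [Nat.sub_self, pow_zero] at h
  exact mtch_two_partial h3 (by omega) h


section Spoiler
variable {M N : ℕ} [NeZero M] [NeZero N]

/-- there is a pair of chosen pairs whose two distances differ, with minimum `d`. -/
def mis (L : List (Fin M × Fin N)) (d : ℕ) : Prop :=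
  ∃ P ∈ L, ∃ P' ∈ L, cdist P.1 P'.1 ≠ cdist P.2 P'.2 ∧
    min (cdist P.1 P'.1) (cdist P.2 P'.2) = d

lemma mis_append {L L' : List (Fin M × Fin N)} {d : ℕ} (h : mis L d) : mis (L ++ L') d := by
  obtain ⟨P, hP, P', hP', h1, h2⟩ := h
  exact ⟨P, List.mem_append_left _ hP, P', List.mem_append_left _ hP', h1, h2⟩

lemma mis_not_partialIso (hM : 3 ≤ M) (hN : 3 ≤ N) {L : List (Fin M × Fin N)} {d : ℕ}
    (h : mis L d) (hd : d ≤ 1) :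
    ¬ PartialIso (SimpleGraph.cycleGraph M) (SimpleGraph.cycleGraph N) L := by
  obtain ⟨P, hP, P', hP', h1, h2⟩ := h
  intro hiso
  obtain ⟨hiff, hadj⟩ := hiso P hP P' hP'
  rw [adj_iff_cdist hM, adj_iff_cdist hN] at hadj
  have h0 : (cdist P.1 P'.1 = 0 ↔ cdist P.2 P'.2 = 0) := by
    rw [cdist_eq_zero_iff, cdist_eq_zero_iff]; exact hiff
  omega

lemma split_one {p p' : Fin M} {q q' : Fin N} {dA dB : ℕ}
    (hA : cdist p p' = dA) (hB : cdist q q' = dB) (hlt : dA < dB) (h2 : 2 ≤ dA) :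
    ∃ v : Fin M, cdist p v = (dA+1)/2 ∧ cdist v p' = dA/2 ∧
      ∀ y : Fin N, cdist q y ≠ (dA+1)/2 ∨ cdist y q' ≠ dA/2 := by
  have hA' : cdist p p' = (dA+1)/2 + dA/2 := by omega
  obtain ⟨v, hv1, hv2⟩ := exists_split p p' hA'
  refine ⟨v, hv1, hv2, fun y => ?_⟩
  by_contra hcon
  push_neg at hcon
  obtain ⟨ha, hb⟩ := hcon
  have htr := tri q y q'
  have h2N := two_cdist_le q q'
  omega

variable (M N) in
/-- the spoiler's maintenance step. -/
lemma maintain (L : List (Fin M × Fin N)) (h : ∃ d, mis L d) :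
    ∃ mv : Fin M ⊕ Fin N, ∀ x : Fin M × Fin N,
      (match mv with | .inl u => x.1 = u | .inr w => x.2 = w) →
      ∀ r : ℕ, sInf {d | mis L d} ≤ 2^(r+1) → ∃ d, mis (L ++ [x]) d ∧ d ≤ 2^r := by
  classical
  have hμ : mis L (sInf {d | mis L d}) := Nat.sInf_mem h
  set μ := sInf {d | mis L d} with hμdef
  obtain ⟨P, hP, P', hP', hne, hmin⟩ := hμ
  have hxmem : ∀ x : Fin M × Fin N, x ∈ L ++ [x] :=
    fun x => List.mem_append_right _ (List.mem_singleton_self x)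
  by_cases hμ1 : μ ≤ 1
  · refine ⟨Sum.inr (0 : Fin N), fun x _ r _ => ⟨μ, ?_, ?_⟩⟩
    · exact mis_append ⟨P, hP, P', hP', hne, hmin⟩
    · have : (1:ℕ) ≤ 2^r := Nat.one_le_two_pow
      omega
  · rcases Nat.lt_or_ge (cdist P.1 P'.1) (cdist P.2 P'.2) with hAB | hAB
    · -- split on the M side
      have hμA : cdist P.1 P'.1 = μ := by omega
      obtain ⟨v, hv1, hv2, hv3⟩ := split_one (dA := μ) (dB := cdist P.2 P'.2) hμA rfl (by omega) (by omega)
      refine ⟨Sum.inl v, fun x hx r hr => ?_⟩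
      have hx1 : x.1 = v := hx
      rcases hv3 x.2 with hm | hm
      · -- pair (P, x) mismatches
        refine ⟨min (cdist P.1 x.1) (cdist P.2 x.2),
          ⟨P, List.mem_append_left _ hP, x, hxmem x, by rw [hx1, hv1]; omega, rfl⟩, ?_⟩
        rw [hx1, hv1]
        omega
      · refine ⟨min (cdist x.1 P'.1) (cdist x.2 P'.2),
          ⟨x, hxmem x, P', List.mem_append_left _ hP', by rw [hx1, hv2]; omega, rfl⟩, ?_⟩
        rw [hx1, hv2]
        omega
    · -- split on the N side
      have hBA : cdist P.2 P'.2 < cdist P.1 P'.1 := by omega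
      have hμB : cdist P.2 P'.2 = μ := by omega
      obtain ⟨v, hv1, hv2, hv3⟩ := split_one (dA := μ) (dB := cdist P.1 P'.1) hμB rfl (by omega) (by omega)
      refine ⟨Sum.inr v, fun x hx r hr => ?_⟩
      have hx2 : x.2 = v := hx
      rcases hv3 x.1 with hm | hm
      · refine ⟨min (cdist P.1 x.1) (cdist P.2 x.2),
          ⟨P, List.mem_append_left _ hP, x, hxmem x, by rw [hx2, hv1]; omega, rfl⟩, ?_⟩
        rw [hx2, hv1]
        omega
      · refine ⟨min (cdist x.1 P'.1) (cdist x.2 P'.2),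
          ⟨x, hxmem x, P', List.mem_append_left _ hP', by rw [hx2, hv2]; omega, rfl⟩, ?_⟩
        rw [hx2, hv2]
        omega

end Spoiler

section SpoilerStrat
variable {n : ℕ} [NeZero n]

open Classical in
noncomputable def spoil (n : ℕ) [NeZero n] : List (Fin n × Fin (n+1)) → Fin n ⊕ Fin (n+1) :=
  fun L =>
    if h : ∃ d, mis L d then (maintain n (n+1) L h).choose
    else if L.length = 0 then Sum.inr 0
    else if L.length = 1 then Sum.inr ⟨(n+1)/2, by omega⟩
    else Sum.inr (⟨(n+1)/2, by omega⟩ + ⟨(n/2+1)/2, by omega⟩ : Fin (n+1))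

set_option maxHeartbeats 1000000 in
theorem spoiler_wins {n m : ℕ} (h3 : 3 ≤ n) (hm3 : 3 ≤ m) (hnm : n ≤ 2^(m-1)) :
    ¬ DuplicatorWins (cycleG n) (cycleG (n+1)) m := by
  haveI : NeZero n := ⟨by omega⟩
  classical
  rintro ⟨D, hD⟩
  have hiso := hD (spoil n)
  have hp1 : (2:ℕ)^(m-1) = 2 * 2^(m-2) := by
    rw [show m - 1 = (m-2)+1 by omega, pow_succ, mul_comm]
  have hp2 : (2:ℕ)^(m-2) = 2 * 2^(m-3) := by
    rw [show m - 2 = (m-3)+1 by omega, pow_succ, mul_comm]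
  have hp3 : (1:ℕ) ≤ 2^(m-3) := Nat.one_le_two_pow
  have hmis0 : ¬ ∃ d, mis (M := n) (N := n+1) [] d := by
    rintro ⟨d, P, hP, -⟩
    simp at hP
  obtain ⟨p0, hp0def⟩ : ∃ p, p = D.resp [] ((spoil n) []) := ⟨_, rfl⟩
  have hs0 : (spoil n) [] = Sum.inr 0 := by
    rw [spoil, dif_neg hmis0]
    rfl
  have hp02 : p0.2 = 0 := by
    rw [hp0def, hs0]
    exact D.resp_right [] 0
  have he1 : efRounds D (spoil n) 1 = [p0] := by
    rw [efRounds_succ, efRounds_zero, ← hp0def]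
    simp
  have hmis1 : ¬ ∃ d, mis [p0] d := by
    rintro ⟨d, P, hP, P', hP', hne, -⟩
    simp at hP hP'
    rw [hP, hP'] at hne
    exact hne (by rw [cdist_self, cdist_self])
  obtain ⟨w1, hw1def⟩ : ∃ w : Fin (n+1), w = ⟨(n+1)/2, by omega⟩ := ⟨_, rfl⟩
  have hs1 : (spoil n) [p0] = Sum.inr w1 := by
    rw [spoil, dif_neg hmis1, hw1def]
    rfl
  obtain ⟨p1, hp1def⟩ : ∃ p, p = D.resp [p0] ((spoil n) [p0]) := ⟨_, rfl⟩
  have hp12 : p1.2 = w1 := by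
    rw [hp1def, hs1]
    exact D.resp_right [p0] w1
  have he2 : efRounds D (spoil n) 2 = [p0, p1] := by
    rw [show (2:ℕ) = 1 + 1 from rfl, efRounds_succ, he1, ← hp1def]
    simp
  have harcw : arc (0 : Fin (n+1)) w1 = (n+1)/2 := by
    rw [arc, sub_zero, hw1def]
  have hdB : cdist p0.2 p1.2 = (n+1)/2 := by
    rw [hp02, hp12]
    exact cdist_of_arc harcw (by omega)
  have hdA_le : 2 * cdist p0.1 p1.1 ≤ n := two_cdist_le p0.1 p1.1
  -- the key invariant from round 3 on
  have key : ∀ i, 3 ≤ i → i ≤ m → ∃ d, mis (efRounds D (spoil n) i) d ∧ d ≤ 2^(m-i) := by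
    intro i hi3 him
    induction i, hi3 using Nat.le_induction with
    | base =>
      by_cases hmis2 : ∃ d, mis (efRounds D (spoil n) 2) d
      · obtain ⟨d, hd⟩ := id hmis2
        have hdle : d ≤ 2^(m-2) := by
          obtain ⟨P, hP, P', hP', hne, hmin⟩ := hd
          have := two_cdist_le P.1 P'.1
          omega
        have hinf : sInf {d | mis (efRounds D (spoil n) 2) d} ≤ 2^((m-3)+1) := by
          have h1 : sInf {d | mis (efRounds D (spoil n) 2) d} ≤ d := Nat.sInf_le hd
          have h2 : (m-3)+1 = m-2 := by omega
          rw [h2]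
          omega
        obtain ⟨mv, hmv⟩ : ∃ v, v = (maintain n (n+1) (efRounds D (spoil n) 2) hmis2).choose :=
          ⟨_, rfl⟩
        have hsL : (spoil n) (efRounds D (spoil n) 2) = mv := by
          rw [spoil, dif_pos hmis2, hmv]
        have hspec := (maintain n (n+1) (efRounds D (spoil n) 2) hmis2).choose_spec
        rw [← hmv] at hspec
        rw [efRounds_succ D (spoil n) 2, hsL]
        refine hspec (D.resp (efRounds D (spoil n) 2) mv) ?_ (m-3) hinf
        rcases mv with u | w
        · exact D.resp_left _ u
        · exact D.resp_right _ w
      · -- antipodal case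
        have hdA : cdist p0.1 p1.1 = cdist p0.2 p1.2 := by
          by_contra hne
          exact hmis2 ⟨_, p0, by rw [he2]; exact List.mem_cons_self,
            p1, by rw [he2]; exact List.mem_cons_of_mem _ (List.mem_singleton_self _), hne, rfl⟩
        have hneven : n = 2 * (n/2) := by omega
        have hcd : cdist p0.1 p1.1 = n/2 := by
          rw [hdA, hdB]; omega
        have hc2 : 2 ≤ n/2 := by omega
        obtain ⟨v3, hv3def⟩ : ∃ v : Fin (n+1), v = w1 + ⟨(n/2+1)/2, by omega⟩ := ⟨_, rfl⟩
        have hsL : (spoil n) (efRounds D (spoil n) 2) = Sum.inr v3 := by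
          rw [spoil, dif_neg hmis2, he2, hv3def, hw1def]
          rfl
        obtain ⟨p2, hp2def⟩ :
            ∃ p, p = D.resp (efRounds D (spoil n) 2) ((spoil n) (efRounds D (spoil n) 2)) :=
          ⟨_, rfl⟩
        have hp22 : p2.2 = v3 := by
          rw [hp2def, hsL]
          exact D.resp_right _ v3
        have he3 : efRounds D (spoil n) 3 = [p0, p1] ++ [p2] := by
          rw [show (3:ℕ) = 2 + 1 from rfl, efRounds_succ, ← hp2def, he2]
        have harc1 : arc w1 v3 = (n/2+1)/2 := by
          rw [hv3def, arc_add]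
        have hdv1 : cdist p1.2 p2.2 = (n/2+1)/2 := by
          rw [hp12, hp22]
          exact cdist_of_arc harc1 (by omega)
        have harc2 : arc (0:Fin (n+1)) v3 = n/2 + (n/2+1)/2 := by
          have h := arc_rel (0:Fin (n+1)) w1 v3
          rw [harcw, harc1] at h
          have h2 := arc_lt (0:Fin (n+1)) v3
          omega
        have harc3 : arc v3 (0:Fin (n+1)) = n/2 + 1 - (n/2+1)/2 := by
          rcases arc_total (0:Fin (n+1)) v3 with h | h <;> omega
        have hdv0 : cdist p2.2 p0.2 = n/2 + 1 - (n/2+1)/2 := by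
          rw [hp22, hp02]
          show min (arc v3 0) (arc (0:Fin (n+1)) v3) = _
          rw [harc2, harc3]
          omega
        by_cases heq : cdist p1.1 p2.1 = (n/2+1)/2
        · -- forced mismatch on (p2, p0)
          have htr := tri p1.1 p2.1 p0.1
          rw [cdist_comm p1.1 p0.1, hcd, heq] at htr
          have hble : 2 * cdist p2.1 p0.1 ≤ n := two_cdist_le p2.1 p0.1
          refine ⟨min (cdist p2.1 p0.1) (cdist p2.2 p0.2), ⟨p2,
            by rw [he3]; exact List.mem_append_right _ (List.mem_singleton_self _),
            p0, by rw [he3]; exact List.mem_append_left _ (List.mem_cons_self), ?_, rfl⟩, ?_⟩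
          · rw [hdv0]; omega
          · rw [hdv0]; omega
        · -- mismatch on (p1, p2)
          refine ⟨min (cdist p1.1 p2.1) (cdist p1.2 p2.2), ⟨p1,
            by rw [he3]; exact List.mem_append_left _ (List.mem_cons_of_mem _ (List.mem_singleton_self _)),
            p2, by rw [he3]; exact List.mem_append_right _ (List.mem_singleton_self _), ?_, rfl⟩, ?_⟩
          · rw [hdv1]; exact heq
          · rw [hdv1]
            have := two_cdist_le p1.1 p2.1
            omega
    | succ i hi3 ih =>
      have hle : i ≤ m := by omega
      obtain ⟨d, hd, hdle⟩ := ih hle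
      have hmisI : ∃ d, mis (efRounds D (spoil n) i) d := ⟨d, hd⟩
      have hinf : sInf {d | mis (efRounds D (spoil n) i) d} ≤ 2^((m-(i+1))+1) := by
        have h1 : sInf {d | mis (efRounds D (spoil n) i) d} ≤ d := Nat.sInf_le hd
        have h2 : (m-(i+1))+1 = m-i := by omega
        rw [h2]
        omega
      obtain ⟨mv, hmv⟩ : ∃ v, v = (maintain n (n+1) (efRounds D (spoil n) i) hmisI).choose :=
        ⟨_, rfl⟩
      have hsL : (spoil n) (efRounds D (spoil n) i) = mv := by
        rw [spoil, dif_pos hmisI, hmv]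
      have hspec := (maintain n (n+1) (efRounds D (spoil n) i) hmisI).choose_spec
      rw [← hmv] at hspec
      rw [efRounds_succ D (spoil n) i, hsL]
      refine hspec (D.resp (efRounds D (spoil n) i) mv) ?_ (m-(i+1)) hinf
      rcases mv with u | w
      · exact D.resp_left _ u
      · exact D.resp_right _ w
  obtain ⟨d, hd, hdle⟩ := key m (by omega) (le_refl m)
  rw [Nat.sub_self, pow_zero] at hdle
  exact mis_not_partialIso h3 (by omega) hd hdle hiso
end SpoilerStrat


lemma enatToEReal_natCast (j : ℕ) : enatToEReal (j : ℕ∞) = ((j : ℝ) : EReal) := rfl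


/-- For every `n ≥ 3`, `log n − 1 < l_EF(C n, C (n+1)) < log n + 1`. -/
theorem statement4 (n : ℕ) (hn : 3 ≤ n) :
    ((Real.logb 2 n - 1 : ℝ) : EReal) < enatToEReal (lEF (cycleG n) (cycleG (n + 1))) ∧
      enatToEReal (lEF (cycleG n) (cycleG (n + 1))) < ((Real.logb 2 n + 1 : ℝ) : EReal) := by
  set k0 := Nat.log 2 n with hk0
  have hk01 : 1 ≤ k0 := by
    rw [hk0]
    exact Nat.le_log_of_pow_le (by norm_num) (by omega)
  have hpow0 : 2^k0 ≤ n := Nat.pow_log_le_self 2 (by omega)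
  have hwin : DuplicatorWins (cycleG n) (cycleG (n+1)) k0 := dup_wins hn hk01 hpow0
  set M0 := Nat.log 2 (n-1) + 1 with hM0
  have hM02 : 2 ≤ M0 := by
    rw [hM0]
    have : 1 ≤ Nat.log 2 (n-1) := Nat.le_log_of_pow_le (by norm_num) (by omega)
    omega
  have hnM0 : n ≤ 2^M0 := by
    have := Nat.lt_pow_succ_log_self (by norm_num : 1 < 2) (n-1)
    rw [hM0]
    omega
  have hub : ∀ m : ℕ, DuplicatorWins (cycleG n) (cycleG (n+1)) m → m ≤ M0 := by
    intro m hw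
    by_contra hc
    push_neg at hc
    refine spoiler_wins hn (by omega) ?_ hw
    calc n ≤ 2^M0 := hnM0
    _ ≤ 2^(m-1) := Nat.pow_le_pow_right (by norm_num) (by omega)
  -- compute the sup
  set S : Set ℕ∞ := {k : ℕ∞ | ∃ m : ℕ, DuplicatorWins (cycleG n) (cycleG (n+1)) m ∧ k = (m : ℕ∞)}
    with hS
  have hle : sSup S ≤ (M0 : ℕ∞) := by
    refine sSup_le ?_
    rintro k ⟨m, hw, rfl⟩
    exact_mod_cast hub m hw
  have hge : (k0 : ℕ∞) ≤ sSup S := le_sSup ⟨k0, hwin, rfl⟩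
  obtain ⟨j, hj⟩ : ∃ j : ℕ, sSup S = (j : ℕ∞) := by
    have : sSup S ≠ ⊤ := by
      intro h
      rw [h] at hle
      exact absurd (top_le_iff.mp hle) (by simp)
    lift sSup S to ℕ using this with j
    exact ⟨j, rfl⟩
  have hjk0 : k0 ≤ j := by
    rw [hj] at hge
    exact_mod_cast hge
  have hjM0 : j ≤ M0 := by
    rw [hj] at hle
    exact_mod_cast hle
  have hlEF : lEF (cycleG n) (cycleG (n+1)) = (j : ℕ∞) := hj
  rw [hlEF, enatToEReal_natCast]
  rw [EReal.coe_lt_coe_iff, EReal.coe_lt_coe_iff]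
  have hn0 : (0:ℝ) < n := by positivity
  constructor
  · -- logb 2 n - 1 < j
    have h1 : Real.logb 2 n < k0 + 1 := by
      rw [Real.logb_lt_iff_lt_rpow (by norm_num) hn0]
      have h2 : (n:ℝ) < (2:ℝ)^(k0+1 : ℕ) := by
        exact_mod_cast Nat.lt_pow_succ_log_self (by norm_num : 1 < 2) n
      calc (n:ℝ) < (2:ℝ)^(k0+1 : ℕ) := h2
      _ = (2:ℝ)^((k0+1 : ℕ) : ℝ) := by
        rw [Real.rpow_natCast]
      _ = (2:ℝ)^((k0:ℝ)+1) := by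
        norm_num
    have h2 : (k0 : ℝ) ≤ j := by exact_mod_cast hjk0
    linarith
  · -- j < logb 2 n + 1
    have h1 : (Nat.log 2 (n-1) : ℝ) < Real.logb 2 n := by
      have h2 : ((2:ℕ)^(Nat.log 2 (n-1)) : ℝ) ≤ ((n-1 : ℕ) : ℝ) := by
        exact_mod_cast Nat.pow_log_le_self 2 (by omega : n - 1 ≠ 0)
      have h3 : Real.logb 2 ((2:ℕ)^(Nat.log 2 (n-1)) : ℝ) = Nat.log 2 (n-1) := by
        push_cast
        rw [Real.logb_pow, show Real.logb 2 2 = 1 by simp]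
        ring
      rw [← h3]
      refine Real.logb_lt_logb (by norm_num) (by positivity) ?_
      have h4 : ((n-1:ℕ):ℝ) < n := by
        have : ((n-1:ℕ):ℝ) = (n:ℝ) - 1 := by
          have : (1:ℝ) ≤ n := by exact_mod_cast (by omega : 1 ≤ n)
          push_cast [Nat.cast_sub (by omega : 1 ≤ n)]
          ring
        linarith [this]
      linarith [h2, h4]
    have h2 : (j : ℝ) ≤ M0 := by exact_mod_cast hjM0
    rw [hM0] at h2
    push_cast at h2
    linarith


end SymPaper
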